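/- arXiv:1604.02474 — 3 statements merged into one kernel-verified Lean document; each statement's English description precedes it below -/
import Mathlib

section
/- With P, ⊃, drop, and join as defined, and given a 'satisfies' predicate sat : P → Prop such that whenever p ⊃ q and sat p then sat q (adequacy), checking a joined stack succeeds iff both parts succeed: for all r₁ r₂, (every element of join r₁ r₂ satisfies sat) ↔ (every element of r₁ satisfies sat ∧ every element of r₂ satisfies sat). -/
/-- `pdrop r p` removes from the stack `r` every predicate implied by `p`,
    updating the comparison predicate as it passes stronger predicates. -/
def pdrop {P : Type*} (imp : P → P → Prop) [DecidableRel imp] : List P → P → List P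
  | [], _ => []
  | q :: r, p => if imp p q then pdrop imp r q else q :: pdrop imp r p

/-- `pjoin r₁ r₂` combines a newer stack `r₁` with an older stack `r₂`,
    eliminating redundant older checks. -/
def pjoin {P : Type*} (imp : P → P → Prop) [DecidableRel imp] : List P → List P → List P
  | [], r₂ => r₂
  | p :: r₁, r₂ => p :: pdrop imp (pjoin imp r₁ r₂) p

lemma pdrop_sound {P : Type*} (imp : P → P → Prop) [DecidableRel imp]
    (sat : P → Prop) (hadeq : ∀ p q, imp p q → sat p → sat q) :
    ∀ (r : List P) (p : P), sat p →
      ((∀ q ∈ pdrop imp r p, sat q) ↔ (∀ q ∈ r, sat q)) := by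
  intro r
  induction r with
  | nil => intro p _; simp [pdrop]
  | cons q r ih =>
    intro p hp
    by_cases h : imp p q
    · have hq : sat q := hadeq _ _ h hp
      simp only [pdrop, if_pos h, List.mem_cons]
      rw [ih q hq]
      constructor
      · intro hs s hs'; rcases hs' with rfl | hs'; exact hq; exact hs s hs'
      · intro hs s hs'; exact hs s (Or.inr hs')
    · simp only [pdrop, if_neg h, List.mem_cons]
      constructor
      · intro hs s hs'
        rcases hs' with rfl | hs'
        · exact hs s (Or.inl rfl)
        · exact (ih p hp).mp (fun t ht => hs t (Or.inr ht)) s hs'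
      · intro hs s hs'
        rcases hs' with rfl | hs'
        · exact hs s (Or.inl rfl)
        · exact (ih p hp).mpr (fun t ht => hs t (Or.inr ht)) s hs'

theorem pjoin_check_sound {P : Type*} (imp : P → P → Prop) [DecidableRel imp]
    (hrefl : ∀ p, imp p p)
    (htrans : ∀ p q s, imp p q → imp q s → imp p s)
    (sat : P → Prop)
    (hadeq : ∀ p q, imp p q → sat p → sat q) :
    ∀ r₁ r₂ : List P,
      (∀ q ∈ pjoin imp r₁ r₂, sat q) ↔ ((∀ q ∈ r₁, sat q) ∧ (∀ q ∈ r₂, sat q)) := by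
  intro r₁
  induction r₁ with
  | nil => intro r₂; simp [pjoin]
  | cons p r₁ ih =>
    intro r₂
    simp only [pjoin, List.mem_cons]
    constructor
    · intro h
      have hp : sat p := h p (Or.inl rfl)
      have hrest : ∀ q ∈ pjoin imp r₁ r₂, sat q :=
        (pdrop_sound imp sat hadeq _ p hp).mp (fun t ht => h t (Or.inr ht))
      obtain ⟨h1, h2⟩ := (ih r₂).mp hrest
      exact ⟨fun q hq => by rcases hq with rfl | hq; exact hp; exact h1 q hq, h2⟩
    · rintro ⟨h1, h2⟩ q hq
      have hp : sat p := h1 p (Or.inl rfl)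
      rcases hq with rfl | hq
      · exact hp
      · exact (pdrop_sound imp sat hadeq _ p hp).mpr
          ((ih r₂).mpr ⟨fun t ht => h1 t (Or.inr ht), h2⟩) q hq
end

section
/- With P, ⊃, drop, join, sat, and adequacy as above, checking is idempotent under drop: for all r₁ r₂ : List P and p : P with sat p, (every element of join r₁ r₂ satisfies sat) ↔ (every element of join r₁ (drop r₂ p) satisfies sat). -/
theorem pdrop_sat {P : Type*} (imp : P → P → Prop) [DecidableRel imp]
    (sat : P → Prop) (hadeq : ∀ p q, imp p q → sat p → sat q) :
    ∀ (r : List P) (p : P), sat p →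
      ((∀ q ∈ r, sat q) ↔ (∀ q ∈ pdrop imp r p, sat q)) := by
  intro r
  induction r with
  | nil => intro p hp; simp [pdrop]
  | cons a r ih =>
    intro p hp
    by_cases h : imp p a
    · have ha : sat a := hadeq _ _ h hp
      simp only [pdrop, if_pos h, List.mem_cons]
      constructor
      · intro H q hq; exact (ih a ha).mp (fun q hq => H q (Or.inr hq)) q hq
      · intro H q hq
        rcases hq with rfl | hq
        · exact ha
        · exact (ih a ha).mpr H q hq
    · simp only [pdrop, if_neg h, List.mem_cons]
      constructor
      · rintro H q (rfl | hq)
        · exact H q (Or.inl rfl)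
        · exact (ih p hp).mp (fun q hq => H q (Or.inr hq)) q hq
      · rintro H q (rfl | hq)
        · exact H q (Or.inl rfl)
        · exact (ih p hp).mpr (fun q hq => H q (Or.inr hq)) q hq

theorem pjoin_drop_idempotent {P : Type*} (imp : P → P → Prop) [DecidableRel imp]
    (hrefl : ∀ p, imp p p)
    (htrans : ∀ p q s, imp p q → imp q s → imp p s)
    (sat : P → Prop)
    (hadeq : ∀ p q, imp p q → sat p → sat q) :
    ∀ (r₁ r₂ : List P) (p : P), sat p →
      ((∀ q ∈ pjoin imp r₁ r₂, sat q) ↔ (∀ q ∈ pjoin imp r₁ (pdrop imp r₂ p), sat q)) := by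
  intro r₁
  induction r₁ with
  | nil => intro r₂ p hp; exact pdrop_sat imp sat hadeq r₂ p hp
  | cons a r₁ ih =>
    intro r₂ p hp
    simp only [pjoin, List.mem_cons]
    constructor
    · rintro H q (rfl | hq)
      · exact H q (Or.inl rfl)
      · have ha : sat a := H a (Or.inl rfl)
        have h1 : ∀ q ∈ pjoin imp r₁ r₂, sat q :=
          (pdrop_sat imp sat hadeq _ a ha).mpr (fun q hq => H q (Or.inr hq))
        have h2 := (ih r₂ p hp).mp h1
        exact (pdrop_sat imp sat hadeq _ a ha).mp h2 q hq
    · rintro H q (rfl | hq)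
      · exact H q (Or.inl rfl)
      · have ha : sat a := H a (Or.inl rfl)
        have h1 : ∀ q ∈ pjoin imp r₁ (pdrop imp r₂ p), sat q :=
          (pdrop_sat imp sat hadeq _ a ha).mpr (fun q hq => H q (Or.inr hq))
        have h2 := (ih r₂ p hp).mpr h1
        exact (pdrop_sat imp sat hadeq _ a ha).mp h2 q hq
end

section
/- Let a finite set S of predicates be given, with ⊃ the equality relation on predicates (which is reflexive, transitive, decidable, and substitutive). If r₁ and r₂ are irredundant lists (no duplicates, since ⊃ is equality) whose elements all lie in S, then join r₁ r₂ is a duplicate-free list with elements in S; consequently its length is at most the cardinality of S. -/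
lemma pdrop_eq_filter {P : Type*} [DecidableEq P] :
    ∀ (r : List P) (p : P), pdrop (· = ·) r p = r.filter (· ≠ p)
  | [], p => rfl
  | q :: r, p => by
    by_cases h : p = q
    · subst h
      simp [pdrop, pdrop_eq_filter r p]
    · simp [pdrop, h, Ne.symm h, pdrop_eq_filter r p]

lemma pjoin_nodup_mem {P : Type*} [DecidableEq P] :
    ∀ (r₁ r₂ : List P), r₂.Nodup →
      (pjoin (· = ·) r₁ r₂).Nodup ∧
        ∀ q ∈ pjoin (· = ·) r₁ r₂, q ∈ r₁ ∨ q ∈ r₂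
  | [], r₂, h => ⟨h, fun q hq => Or.inr hq⟩
  | p :: r₁, r₂, h => by
    obtain ⟨hnd, hmem⟩ := pjoin_nodup_mem r₁ r₂ h
    rw [show pjoin (· = ·) (p :: r₁) r₂ = p :: pdrop (· = ·) (pjoin (· = ·) r₁ r₂) p from rfl,
      pdrop_eq_filter]
    constructor
    · refine List.Nodup.cons ?_ (hnd.filter _)
      intro hmemf
      have := List.of_mem_filter hmemf
      simp at this
    · intro q hq
      rcases List.mem_cons.mp hq with hq | hq
      · exact Or.inl (by simp [hq])
      · rcases hmem q (List.mem_of_mem_filter hq) with h1 | h2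
        · exact Or.inl (List.mem_cons_of_mem _ h1)
        · exact Or.inr h2

theorem pjoin_eq_bound {P : Type*} [DecidableEq P] (S : Finset P) :
    ∀ r₁ r₂ : List P, r₁.Nodup → r₂.Nodup →
      (∀ q ∈ r₁, q ∈ S) → (∀ q ∈ r₂, q ∈ S) →
      (pjoin (· = ·) r₁ r₂).Nodup ∧ (∀ q ∈ pjoin (· = ·) r₁ r₂, q ∈ S) ∧
        (pjoin (· = ·) r₁ r₂).length ≤ S.card := by
  intro r₁ r₂ _ h2 hs1 hs2
  obtain ⟨hnd, hmem⟩ := pjoin_nodup_mem r₁ r₂ h2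
  have hS : ∀ q ∈ pjoin (· = ·) r₁ r₂, q ∈ S := fun q hq =>
    (hmem q hq).elim (hs1 q) (hs2 q)
  refine ⟨hnd, hS, ?_⟩
  classical
  calc (pjoin (· = ·) r₁ r₂).length = (pjoin (· = ·) r₁ r₂).toFinset.card :=
        (List.toFinset_card_of_nodup hnd).symm
    _ ≤ S.card := Finset.card_le_card (fun q hq => hS q (List.mem_toFinset.mp hq))
end
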